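/- The natural map from GSp_4(O/p^{e}) acting on rank-2 isotropic direct summands of (O/p^e)^4 is transitive, and consequently the coset space GSp_4(O/p^e)/U_0(p^e) is in bijection with the set of such Lagrangian submodules, where U_0(p^e) is the stabilizer of span(e_1, e_2). -/

import Mathlib

/-!
A Lagrangian `M` has a basis `v` that extends to a symplectic basis `v, w` of `R^{l ⊕ l}`: the
coordinate functionals of `v`, composed with the projection along a complement of `M`, are of the
form `ω(·, w)` because `ω(u, w) = u ⬝ᵥ J *ᵥ w` is nondegenerate, and such a dual family can be made
isotropic by subtracting combinations of the `v i`. The matrix with rows `v, w` is symplectic, so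
its transpose is a symplectic matrix mapping the standard Lagrangian `L₀` onto `M`. Conversely
`γ L₀` is Lagrangian for `γ ∈ GSp` since `γᵀ J γ = ν J`, and `γ L₀ = δ L₀` iff `γ⁻¹ δ` stabilises
`L₀`, i.e. is block upper triangular; the inverse of such a matrix is block upper triangular too.
-/

open Matrix Sum

namespace Matrix

variable {R : Type*} [CommRing R]

theorem transpose_mul_mul_eq_smul_of_mul_mul_transpose_eq_smul {n : Type*} [Fintype n]
    [DecidableEq n] {A J : Matrix n n R} {c : R} (hJ : J * J = -1) (hA : IsUnit A)
    (h : A * J * Aᵀ = c • J) : Aᵀ * J * A = c • J := by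
  obtain ⟨B, hBA⟩ := hA.exists_left_inv
  have hJAt : J * Aᵀ = c • (B * J) := by
    rw [← Matrix.one_mul (J * Aᵀ), ← hBA, Matrix.mul_assoc, ← Matrix.mul_assoc A, h,
      Matrix.mul_smul]
  calc Aᵀ * J * A = -(J * (J * Aᵀ)) * J * A := by
        rw [← Matrix.mul_assoc, hJ, neg_one_mul, neg_neg]
    _ = -c • (J * B * (J * J) * A) := by
      rw [hJAt]
      simp only [Matrix.mul_smul, Matrix.smul_mul, neg_smul, Matrix.neg_mul, Matrix.mul_assoc]
    _ = c • J := by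
      rw [hJ, mul_neg_one, Matrix.neg_mul, Matrix.mul_assoc, hBA, Matrix.mul_one, smul_neg,
        neg_smul, neg_neg]

theorem mulVec_dotProduct_mulVec_mulVec {m n : Type*} [Fintype m] [Fintype n]
    (A : Matrix m n R) (J : Matrix m m R) (u v : n → R) :
    A *ᵥ u ⬝ᵥ J *ᵥ A *ᵥ v = u ⬝ᵥ (Aᵀ * J * A) *ᵥ v := by
  rw [mulVec_mulVec, dotProduct_mulVec, ← vecMul_transpose, vecMul_vecMul, ← Matrix.mul_assoc,
    ← dotProduct_mulVec]

theorem mul_mul_transpose_apply {m n : Type*} [Fintype n] (C : Matrix m n R) (J : Matrix n n R)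
    (a b : m) : (C * J * Cᵀ) a b = C a ⬝ᵥ J *ᵥ C b := by
  rw [dotProduct_mulVec, mul_apply]
  rfl

theorem toBlocks₂₁_nonsing_inv_eq_zero {m n : Type*} [Fintype m] [DecidableEq m] [Fintype n]
    [DecidableEq n] {A : Matrix (m ⊕ n) (m ⊕ n) R} (hA : IsUnit A) (h : A.toBlocks₂₁ = 0) :
    A⁻¹.toBlocks₂₁ = 0 := by
  obtain ⟨A₁₁, A₁₂, A₂₂, rfl⟩ : ∃ A₁₁ A₁₂ A₂₂, A = fromBlocks A₁₁ A₁₂ 0 A₂₂ :=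
    ⟨_, _, _, h ▸ (fromBlocks_toBlocks A).symm⟩
  obtain ⟨h₁₁, h₂₂⟩ := isUnit_fromBlocks_zero₂₁.1 hA
  rw [inv_fromBlocks_zero₂₁_of_isUnit_iff _ _ _ (iff_of_true h₁₁ h₂₂), toBlocks_fromBlocks₂₁]

variable {n : Type*} [Fintype n] [DecidableEq n]

theorem map_inv_mulVecLin_map_mulVecLin (γ : GL n R) (p : Submodule R (n → R)) :
    (p.map (γ : Matrix n n R).mulVecLin).map ((γ⁻¹ : GL n R) : Matrix n n R).mulVecLin = p := by
  rw [← Submodule.map_comp, ← mulVecLin_mul, ← Units.val_mul, inv_mul_cancel, Units.val_one,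
    mulVecLin_one, Submodule.map_id]

theorem map_mulVecLin_eq_map_mulVecLin_iff (γ δ : GL n R) (p : Submodule R (n → R)) :
    p.map (γ : Matrix n n R).mulVecLin = p.map (δ : Matrix n n R).mulVecLin ↔
      p.map ((γ⁻¹ * δ : GL n R) : Matrix n n R).mulVecLin = p := by
  rw [Units.val_mul, mulVecLin_mul, Submodule.map_comp,
    ← (Submodule.map_injective_of_injective (f := ((γ⁻¹ : GL n R) : Matrix n n R).mulVecLin)
      (mulVec_injective_of_isUnit γ⁻¹.isUnit)).eq_iff,
    map_inv_mulVecLin_map_mulVecLin, eq_comm]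

theorem exists_dotProduct_mulVec_eq {J : Matrix n n R} (hJ : IsUnit J.det)
    (f : (n → R) →ₗ[R] R) : ∃ w : n → R, ∀ u, u ⬝ᵥ J *ᵥ w = f u := by
  refine ⟨J⁻¹ *ᵥ fun k => f fun j => if k = j then 1 else 0, fun u => ?_⟩
  rw [mulVec_mulVec, mul_nonsing_inv _ hJ, one_mulVec, f.pi_apply_eq_sum_univ u]
  simp only [dotProduct, smul_eq_mul]

theorem exists_dual_family_of_isCompl {ι : Type*} [DecidableEq ι] {J : Matrix n n R}
    (hJ : IsUnit J.det) {M N : Submodule R (n → R)} (h : IsCompl M N) (b : Module.Basis ι R M) :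
    ∃ w : ι → n → R, ∀ i j, (b i : n → R) ⬝ᵥ J *ᵥ w j = if i = j then 1 else 0 := by
  choose w hw using fun j => exists_dotProduct_mulVec_eq hJ (b.coord j ∘ₗ M.projectionOnto N h)
  refine ⟨w, fun i j => ?_⟩
  rw [hw, LinearMap.comp_apply, Submodule.projectionOnto_apply_left, Module.Basis.coord_apply,
    Module.Basis.repr_self_apply]

end Matrix

/-- Replacing `w j` by `w j - ∑_{k < j} B (w j) (w k) • v k` kills the pairings among the `w`s:
the order on `ι` picks one half of the alternating matrix `(B (w i) (w j))`. -/
theorem LinearMap.BilinForm.exists_isotropic_dual_family {R V ι : Type*} [CommRing R]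
    [AddCommGroup V] [Module R V] [Fintype ι] [DecidableEq ι] [LinearOrder ι]
    {B : LinearMap.BilinForm R V} (hB : B.IsAlt) {v w : ι → V}
    (hv : ∀ i j, B (v i) (v j) = 0) (hvw : ∀ i j, B (v i) (w j) = if i = j then 1 else 0) :
    ∃ w' : ι → V, (∀ i j, B (v i) (w' j) = if i = j then 1 else 0) ∧
      ∀ i j, B (w' i) (w' j) = 0 := by
  set s : ι → V := fun j => ∑ k ∈ Finset.univ.filter (· < j), B (w j) (w k) • v k
  have hvs : ∀ i j, B (v i) (s j) = 0 := by simp [s, hv]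
  have hss : ∀ i j, B (s i) (s j) = 0 := by simp [s, hv]
  have hwv : ∀ i k, B (w i) (v k) = -if k = i then 1 else 0 := fun i k => by
    rw [← LinearMap.IsAlt.neg hB, hvw]
  have hws : ∀ i j, B (w i) (s j) = -if i < j then B (w j) (w i) else 0 := by
    simp [s, hwv]
  have hsw : ∀ i j, B (s i) (w j) = if j < i then B (w i) (w j) else 0 := by
    simp [s, hvw]
  refine ⟨fun j => w j - s j, fun i j => by simp [hvw, hvs], fun i j => ?_⟩
  simp only [map_sub, LinearMap.sub_apply, hws, hsw, hss]
  rcases lt_trichotomy i j with hij | rfl | hij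
  · simp [hij, hij.not_gt, ← LinearMap.IsAlt.neg hB (w j) (w i)]
  · simp [hB.self_eq_zero]
  · simp [hij, hij.not_gt]

namespace Symplectic

section Form

variable {l R : Type*} [DecidableEq l] [CommRing R]

variable (l R) in
def stdJ : Matrix (l ⊕ l) (l ⊕ l) R := fromBlocks 0 1 (-1) 0

theorem stdJ_eq_neg_J : stdJ l R = -J l R := by
  simp [stdJ, J, fromBlocks_neg]

variable [Fintype l]

theorem stdJ_mul_stdJ : stdJ l R * stdJ l R = -1 := by
  rw [stdJ_eq_neg_J, neg_mul_neg, J_squared]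

theorem isUnit_det_stdJ : IsUnit (stdJ l R).det := by
  rw [stdJ_eq_neg_J, det_neg]
  exact (isUnit_neg_one.pow _).mul (isUnit_det_J l R)

theorem dotProduct_stdJ_mulVec (u v : l ⊕ l → R) :
    u ⬝ᵥ stdJ l R *ᵥ v = u ∘ inl ⬝ᵥ v ∘ inr - u ∘ inr ⬝ᵥ v ∘ inl := by
  simp [stdJ, fromBlocks_mulVec, dotProduct, Fintype.sum_sum_type, sub_eq_add_neg, neg_mulVec]

theorem neg_dotProduct_stdJ_mulVec (u v : l ⊕ l → R) :
    -(u ⬝ᵥ stdJ l R *ᵥ v) = v ⬝ᵥ stdJ l R *ᵥ u := by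
  rw [dotProduct_stdJ_mulVec, dotProduct_stdJ_mulVec, neg_sub, dotProduct_comm (u ∘ inl),
    dotProduct_comm (u ∘ inr)]

theorem isAlt_toBilin'_stdJ : (toBilin' (stdJ l R)).IsAlt := fun u => by
  rw [toBilin'_apply', dotProduct_stdJ_mulVec, dotProduct_comm, sub_self]

theorem mem_symplecticGroup_iff_mul_stdJ_mul_transpose {A : Matrix (l ⊕ l) (l ⊕ l) R} :
    A ∈ symplecticGroup l R ↔ A * stdJ l R * Aᵀ = stdJ l R := by
  simp [SymplecticGroup.mem_iff, stdJ_eq_neg_J]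

end Form

variable {l R : Type*} [Fintype l] [DecidableEq l] [CommRing R]

local notation "𝕄" => Matrix (l ⊕ l) (l ⊕ l) R

variable (l R) in
def stdLagrangian : Submodule R (l ⊕ l → R) :=
  Submodule.span R (Set.range fun i => Pi.single (inl i) 1)

variable (l) in
def IsLagrangian (M : Submodule R (l ⊕ l → R)) : Prop :=
  (∃ N, IsCompl M N) ∧ Module.Free R M ∧ Module.finrank R M = Fintype.card l ∧
    ∀ u ∈ M, ∀ v ∈ M, u ⬝ᵥ stdJ l R *ᵥ v = 0

theorem mem_stdLagrangian_iff {v : l ⊕ l → R} : v ∈ stdLagrangian l R ↔ v ∘ inr = 0 := by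
  rw [stdLagrangian, Submodule.mem_span_range_iff_exists_fun]
  constructor
  · rintro ⟨c, rfl⟩
    ext i
    simp [Finset.sum_apply]
  · intro hv
    refine ⟨v ∘ inl, funext fun k => ?_⟩
    rcases k with i | i
    · simp [Finset.sum_apply, Pi.single_apply]
    · simpa [Finset.sum_apply, Pi.single_apply] using (congrFun hv i).symm

theorem map_stdLagrangian (A : 𝕄) :
    (stdLagrangian l R).map A.mulVecLin = Submodule.span R (Set.range (A.col ∘ inl)) := by
  rw [stdLagrangian, Submodule.map_span, ← Set.range_comp]
  simp [Function.comp_def]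

theorem dotProduct_stdJ_mulVec_eq_zero_of_mem_stdLagrangian {u v : l ⊕ l → R}
    (hu : u ∈ stdLagrangian l R) (hv : v ∈ stdLagrangian l R) : u ⬝ᵥ stdJ l R *ᵥ v = 0 := by
  rw [mem_stdLagrangian_iff] at hu hv
  rw [dotProduct_stdJ_mulVec, hu, hv, zero_dotProduct, dotProduct_zero, sub_zero]

theorem isLagrangian_map_stdLagrangian [Nontrivial R] {γ : GL (l ⊕ l) R} {ν : R}
    (hγ : (γ : 𝕄) * stdJ l R * (γ : 𝕄)ᵀ = ν • stdJ l R) :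
    IsLagrangian l ((stdLagrangian l R).map (γ : 𝕄).mulVecLin) := by
  have hflip := transpose_mul_mul_eq_smul_of_mul_mul_transpose_eq_smul stdJ_mul_stdJ γ.isUnit hγ
  have hli : LinearIndependent R (γ : 𝕄).col :=
    linearIndependent_cols_of_isUnit (A := (γ : 𝕄)) γ.isUnit
  have hspan : Submodule.span R (Set.range (γ : 𝕄).col) = ⊤ := by
    rw [← range_mulVecLin, LinearMap.range_eq_top]
    exact mulVec_surjective_iff_isUnit.2 γ.isUnit
  refine ⟨⟨Submodule.span R (Set.range ((γ : 𝕄).col ∘ inr)), ?_⟩, ?_, ?_, ?_⟩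
  · rw [map_stdLagrangian, Set.range_comp, Set.range_comp]
    exact hli.isCompl_span_image hspan Set.isCompl_range_inl_range_inr
  · rw [map_stdLagrangian]
    exact Module.Free.of_basis (Module.Basis.span (hli.comp inl inl_injective))
  · rw [map_stdLagrangian]
    exact finrank_span_eq_card (hli.comp inl inl_injective)
  · rintro _ ⟨u, hu, rfl⟩ _ ⟨v, hv, rfl⟩
    rw [mulVecLin_apply, mulVecLin_apply, mulVec_dotProduct_mulVec_mulVec, hflip, smul_mulVec,
      dotProduct_smul, dotProduct_stdJ_mulVec_eq_zero_of_mem_stdLagrangian hu hv, smul_zero]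

theorem map_stdLagrangian_le_iff (A : 𝕄) :
    (stdLagrangian l R).map A.mulVecLin ≤ stdLagrangian l R ↔ A.toBlocks₂₁ = 0 := by
  rw [map_stdLagrangian, Submodule.span_le, Set.range_subset_iff, ← Matrix.ext_iff, forall_comm]
  simp [mem_stdLagrangian_iff, funext_iff, toBlocks₂₁]

theorem map_stdLagrangian_eq_self_iff (σ : GL (l ⊕ l) R) :
    (stdLagrangian l R).map (σ : 𝕄).mulVecLin = stdLagrangian l R ↔ (σ : 𝕄).toBlocks₂₁ = 0 := by
  refine ⟨fun h => (map_stdLagrangian_le_iff _).1 h.le, fun h =>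
    le_antisymm ((map_stdLagrangian_le_iff _).2 h) ?_⟩
  have hinv : ((σ⁻¹ : GL (l ⊕ l) R) : 𝕄).toBlocks₂₁ = 0 := by
    rw [coe_units_inv]
    exact toBlocks₂₁_nonsing_inv_eq_zero σ.isUnit h
  calc stdLagrangian l R
      = ((stdLagrangian l R).map ((σ⁻¹ : GL (l ⊕ l) R) : 𝕄).mulVecLin).map
          ((σ⁻¹⁻¹ : GL (l ⊕ l) R) : 𝕄).mulVecLin := (map_inv_mulVecLin_map_mulVecLin _ _).symm
    _ ≤ (stdLagrangian l R).map (σ : 𝕄).mulVecLin := by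
      rw [inv_inv]
      exact Submodule.map_mono ((map_stdLagrangian_le_iff _).2 hinv)

theorem mul_stdJ_mul_transpose_eq_stdJ {C : 𝕄}
    (hvv : ∀ i j, C (inl i) ⬝ᵥ stdJ l R *ᵥ C (inl j) = 0)
    (hvw : ∀ i j, C (inl i) ⬝ᵥ stdJ l R *ᵥ C (inr j) = if i = j then 1 else 0)
    (hww : ∀ i j, C (inr i) ⬝ᵥ stdJ l R *ᵥ C (inr j) = 0) :
    C * stdJ l R * Cᵀ = stdJ l R := by
  have hwv : ∀ i j, C (inr i) ⬝ᵥ stdJ l R *ᵥ C (inl j) = -if j = i then 1 else 0 := fun i j => by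
    rw [← neg_dotProduct_stdJ_mulVec, hvw]
  ext (i | i) (j | j) <;>
    simp only [mul_mul_transpose_apply, hvv, hvw, hww, hwv] <;>
    simp [stdJ, one_apply, eq_comm]

theorem exists_symplectic_map_stdLagrangian_eq [Nontrivial R] [LinearOrder l]
    {M : Submodule R (l ⊕ l → R)} (hM : IsLagrangian l M) :
    ∃ γ : GL (l ⊕ l) R, (γ : 𝕄) * stdJ l R * (γ : 𝕄)ᵀ = stdJ l R ∧
      (stdLagrangian l R).map (γ : 𝕄).mulVecLin = M := by
  obtain ⟨⟨N, hMN⟩, hfree, hrank, hiso⟩ := hM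
  have : Module.Finite R M :=
    Module.Finite.of_surjective _ (Submodule.projectionOnto_surjective hMN)
  let b : Module.Basis l R M :=
    (Module.finBasisOfFinrankEq R M hrank).reindex (Fintype.equivFin l).symm
  have hbb : ∀ i j, (b i : l ⊕ l → R) ⬝ᵥ stdJ l R *ᵥ b j = 0 :=
    fun i j => hiso _ (b i).2 _ (b j).2
  obtain ⟨w₀, hw₀⟩ := exists_dual_family_of_isCompl isUnit_det_stdJ hMN b
  obtain ⟨w, hbw, hww⟩ := LinearMap.BilinForm.exists_isotropic_dual_family isAlt_toBilin'_stdJ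
    (v := fun i => (b i : l ⊕ l → R)) (by simpa [toBilin'_apply'] using hbb)
    (by simpa [toBilin'_apply'] using hw₀)
  simp only [toBilin'_apply'] at hbw hww
  set C : 𝕄 := of (Sum.elim (fun i => (b i : l ⊕ l → R)) w)
  have hC := mem_symplecticGroup_iff_mul_stdJ_mul_transpose.2
    (mul_stdJ_mul_transpose_eq_stdJ (C := C) hbb hbw hww)
  have hCt := SymplecticGroup.transpose_mem hC
  refine ⟨nonsingInvUnit _ (SymplecticGroup.symplectic_det hCt),
    mem_symplecticGroup_iff_mul_stdJ_mul_transpose.1 hCt, ?_⟩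
  show (stdLagrangian l R).map Cᵀ.mulVecLin = M
  rw [map_stdLagrangian, col_transpose]
  show Submodule.span R (Set.range (M.subtype ∘ b)) = M
  rw [Set.range_comp, Submodule.span_image, b.span_eq, Submodule.map_top, Submodule.range_subtype]

theorem stdLagrangian_fin_two (R : Type*) [CommRing R] :
    stdLagrangian (Fin 2) R =
      Submodule.span R {Pi.single (Sum.inl 0) 1, Pi.single (Sum.inl 1) 1} := by
  rw [stdLagrangian]
  congr 1
  ext
  simp [Fin.exists_fin_two, eq_comm]

end Symplectic

theorem gsp4_transitive_lagrangians_dvr_quotient_general (O : Type*) [CommRing O] [IsDomain O]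
    [IsDiscreteValuationRing O] (e : ℕ) (he : 1 ≤ e) :
    let R := O ⧸ (IsLocalRing.maximalIdeal O ^ e)
    let ι := Fin 2 ⊕ Fin 2
    let J : Matrix ι ι R := Matrix.fromBlocks 0 1 (-1) 0
    let GSp : Set (GL ι R) :=
      {γ | ∃ ν : Rˣ, (γ : Matrix ι ι R) * J * (γ : Matrix ι ι R)ᵀ = (ν : R) • J}
    let L0 : Submodule R (ι → R) :=
      Submodule.span R {Pi.single (Sum.inl 0) 1, Pi.single (Sum.inl 1) 1}
    let IsLagrangian : Submodule R (ι → R) → Prop := fun M =>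
      (∃ N, IsCompl M N) ∧ Module.Free R M ∧ Module.finrank R M = 2 ∧
        ∀ u ∈ M, ∀ v ∈ M, u ⬝ᵥ J.mulVec v = 0
    (∀ γ ∈ GSp, IsLagrangian (L0.map (Matrix.mulVecLin (γ : Matrix ι ι R)))) ∧
    (∀ M, IsLagrangian M →
      ∃ γ ∈ GSp, L0.map (Matrix.mulVecLin (γ : Matrix ι ι R)) = M) ∧
    (∀ γ ∈ GSp, ∀ δ ∈ GSp,
      (L0.map (Matrix.mulVecLin (γ : Matrix ι ι R))
          = L0.map (Matrix.mulVecLin (δ : Matrix ι ι R)) ↔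
        ∀ i j : Fin 2,
          ((γ⁻¹ * δ : GL ι R) : Matrix ι ι R) (Sum.inr i) (Sum.inl j) = 0)) := by
  have : Nontrivial (O ⧸ IsLocalRing.maximalIdeal O ^ e) :=
    Ideal.Quotient.nontrivial_iff.2 (by simp [(IsLocalRing.maximalIdeal.isMaximal O).ne_top]; omega)
  intro R ι J GSp L0 IsLag
  have hL0 : L0 = Symplectic.stdLagrangian (Fin 2) R := (Symplectic.stdLagrangian_fin_two R).symm
  clear_value L0
  subst hL0
  refine ⟨fun γ ⟨ν, hν⟩ => Symplectic.isLagrangian_map_stdLagrangian hν, fun M hM => ?_,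
    fun γ _ δ _ => (map_mulVecLin_eq_map_mulVecLin_iff γ δ _).trans
      ((Symplectic.map_stdLagrangian_eq_self_iff _).trans Matrix.ext_iff.symm)⟩
  obtain ⟨γ, hγ, hγM⟩ := Symplectic.exists_symplectic_map_stdLagrangian_eq hM
  exact ⟨γ, ⟨1, by rw [Units.val_one, one_smul]; exact hγ⟩, hγM⟩

/-- Over `R = O/p^e` (`O` a DVR with finite residue field), `GSp₄(R)` acts transitively on
the free rank-2 isotropic direct summands (Lagrangian submodules) of `R⁴`; moreover `GSp₄(R)`
preserves the set of Lagrangians, and two elements of `GSp₄(R)` move the standard Lagrangian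
`L₀ = span(e₁,e₂)` to the same Lagrangian iff they lie in the same left coset of the
stabilizer `U₀(p^e)` (lower-left 2×2 block zero).  Consequently the coset space
`GSp₄(R)/U₀(p^e)` is in bijection with the set of Lagrangian submodules. -/
theorem gsp4_transitive_lagrangians_dvr_quotient (O : Type*) [CommRing O] [IsDomain O]
    [IsDiscreteValuationRing O] [Finite (IsLocalRing.ResidueField O)] (e : ℕ) (he : 1 ≤ e) :
    let R := O ⧸ (IsLocalRing.maximalIdeal O ^ e)
    let ι := Fin 2 ⊕ Fin 2
    let J : Matrix ι ι R := Matrix.fromBlocks 0 1 (-1) 0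
    let GSp : Set (GL ι R) :=
      {γ | ∃ ν : Rˣ, (γ : Matrix ι ι R) * J * (γ : Matrix ι ι R)ᵀ = (ν : R) • J}
    let L0 : Submodule R (ι → R) :=
      Submodule.span R {Pi.single (Sum.inl 0) 1, Pi.single (Sum.inl 1) 1}
    let IsLagrangian : Submodule R (ι → R) → Prop := fun M =>
      (∃ N, IsCompl M N) ∧ Module.Free R M ∧ Module.finrank R M = 2 ∧
        ∀ u ∈ M, ∀ v ∈ M, u ⬝ᵥ J.mulVec v = 0
    (∀ γ ∈ GSp, IsLagrangian (L0.map (Matrix.mulVecLin (γ : Matrix ι ι R)))) ∧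
    (∀ M, IsLagrangian M →
      ∃ γ ∈ GSp, L0.map (Matrix.mulVecLin (γ : Matrix ι ι R)) = M) ∧
    (∀ γ ∈ GSp, ∀ δ ∈ GSp,
      (L0.map (Matrix.mulVecLin (γ : Matrix ι ι R))
          = L0.map (Matrix.mulVecLin (δ : Matrix ι ι R)) ↔
        ∀ i j : Fin 2,
          ((γ⁻¹ * δ : GL ι R) : Matrix ι ι R) (Sum.inr i) (Sum.inl j) = 0)) :=
  gsp4_transitive_lagrangians_dvr_quotient_general O e he
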